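/- For the two-houses cyclic causal theory Δ = {fire(h₂) ⇒ fire(h₁), fire(h₁) ⇒ fire(h₂), start_fire(h₁) ⇒ fire(h₁), start_fire(h₂) ⇒ fire(h₂)} with external premises E = {start_fire(h₁), ¬start_fire(h₁), start_fire(h₂), ¬start_fire(h₂), ¬fire(h₁), ¬fire(h₂)}, the world ω₂ = {fire(h₁), fire(h₂)} (with both start_fire atoms false) is a model of the completion of the explanatory closure of (Δ,E) but is NOT a causal world of the causal system (Δ, E, ∅), i.e., C(ω₂ ∩ E) ≠ ω₂. -/

import Mathlib

/-- Propositional formulas over an alphabet `α`. -/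
inductive Form (α : Type) : Type where
  | atom : α → Form α
  | tru : Form α
  | fls : Form α
  | neg : Form α → Form α
  | conj : Form α → Form α → Form α
  | disj : Form α → Form α → Form α

variable {α : Type}

/-- Truth-value of a formula in a world (truth assignment). -/
def Form.eval (v : α → Bool) : Form α → Bool
  | .atom a => v a
  | .tru => true
  | .fls => false
  | .neg φ => !φ.eval v
  | .conj φ ψ => φ.eval v && ψ.eval v
  | .disj φ ψ => φ.eval v || ψ.eval v

/-- Material implication. -/
def Form.impl (φ ψ : Form α) : Form α := .disj (.neg φ) ψ

/-- Biconditional. -/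
def Form.iff (φ ψ : Form α) : Form α := .conj (φ.impl ψ) (ψ.impl φ)

/-- Classical (semantic) entailment, `Φ ⊢ ψ`. -/
def Entails (Φ : Set (Form α)) (ψ : Form α) : Prop :=
  ∀ v : α → Bool, (∀ φ ∈ Φ, φ.eval v = true) → ψ.eval v = true

/-- Conjunction of a finite list of formulas. -/
def conjList (L : List (Form α)) : Form α := L.foldr .conj .tru

/-- Disjunction of a finite list of formulas. -/
def disjList (L : List (Form α)) : Form α := L.foldr .disj .fls

/-- Literals: an atom together with a polarity. -/
def litForm (l : α × Bool) : Form α := if l.2 then .atom l.1 else .neg (.atom l.1)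

/-- The set of formulas true in a world: a world viewed as a maximal
deductively closed consistent set of formulas. -/
def worldSet (v : α → Bool) : Set (Form α) := {φ : Form α | φ.eval v = true}

/-- The smallest causal production inference relation containing the causal theory `Δ`:
closed under Strengthening, Weakening, And, Truth/Falsity, Cut and Or. -/
inductive Derives (Δ : Set (Form α × Form α)) : Form α → Form α → Prop where
  | base {φ ψ} : (φ, ψ) ∈ Δ → Derives Δ φ ψ
  | strengthening {φ ψ ρ} : Entails {φ} ψ → Derives Δ ψ ρ → Derives Δ φ ρ
  | weakening {φ ψ ρ} : Derives Δ φ ψ → Entails {ψ} ρ → Derives Δ φ ρ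
  | and {φ ψ ρ} : Derives Δ φ ψ → Derives Δ φ ρ → Derives Δ φ (ψ.conj ρ)
  | top : Derives Δ .tru .tru
  | bot : Derives Δ .fls .fls
  | cut {φ ψ ρ} : Derives Δ φ ψ → Derives Δ (φ.conj ψ) ρ → Derives Δ φ ρ
  | or {φ ψ ρ} : Derives Δ φ ρ → Derives Δ ψ ρ → Derives Δ (φ.disj ψ) ρ

/-- The consequence operator `C` of the causal production inference relation
generated by `Δ`: `ψ ∈ C(Φ)` iff a finite conjunction from `Φ` produces `ψ`. -/
def Cons (Δ : Set (Form α × Form α)) (Φ : Set (Form α)) : Set (Form α) :=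
  {ψ | ∃ L : List (Form α), (∀ φ ∈ L, φ ∈ Φ) ∧ Derives Δ (conjList L) ψ}

/-- A deterministic causal system: causal knowledge `Δ` (a causal theory given as a set
of (cause, effect) pairs), external premises `E` (a set of literals) and
observations `O`. -/
structure CausalSystem (α : Type) where
  Δ : Set (Form α × Form α)
  E : Set (α × Bool)
  O : Set (Form α)

/-- The explanatory closure `Δ(CS) = Δ ∪ {l ⇒ l : l ∈ E}`. -/
def CausalSystem.closure (CS : CausalSystem α) : Set (Form α × Form α) :=
  CS.Δ ∪ {p | ∃ l ∈ CS.E, p = (litForm l, litForm l)}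

/-- The external premises true in the world `v`. -/
def CausalSystem.extTrue (CS : CausalSystem α) (v : α → Bool) : Set (Form α) :=
  {φ | ∃ l ∈ CS.E, φ = litForm l ∧ (litForm l).eval v = true}

/-- `v` is a causal world of the causal system: `C(ω ∩ E) = ω` and `ω ⊨ O`. -/
def CausalSystem.CausalWorld (CS : CausalSystem α) (v : α → Bool) : Prop :=
  Cons CS.closure (CS.extTrue v) = worldSet v ∧ ∀ o ∈ CS.O, o.eval v = true

/-- A literal causal rule: body a list of literals, head a literal or `⊥`. -/
structure LitRule (α : Type) where
  body : List (α × Bool)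
  head : Option (α × Bool)

def LitRule.bodyForm (r : LitRule α) : Form α := conjList (r.body.map litForm)

def LitRule.headForm (r : LitRule α) : Form α :=
  match r.head with
  | some l => litForm l
  | none => .fls

def LitRule.pair (r : LitRule α) : Form α × Form α := (r.bodyForm, r.headForm)

def theoryPairs (Δ : List (LitRule α)) : Set (Form α × Form α) :=
  {p | ∃ r ∈ Δ, p = r.pair}

variable [DecidableEq α]

/-- The disjunction of the bodies of all rules with head `h`. -/
def headDisj (Δ : List (LitRule α)) (h : Option (α × Bool)) : Form α :=
  disjList ((Δ.filter (fun r => r.head = h)).map LitRule.bodyForm)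

/-- `v` models the completion of `Δ`. -/
def ModelsCompletion (Δ : List (LitRule α)) (v : α → Bool) : Prop :=
  (∀ l : α × Bool, ((litForm l).iff (headDisj Δ (some l))).eval v = true) ∧
    ((Form.fls.iff (headDisj Δ none)).eval v = true)

/-- The four atoms of the two-houses example. -/
inductive At : Type where
  | sf1 | sf2 | f1 | f2
deriving DecidableEq

open At

/-- The cyclic causal theory of the two houses. -/
def houseRules : List (LitRule At) :=
  [⟨[(f2, true)], some (f1, true)⟩,
   ⟨[(f1, true)], some (f2, true)⟩,
   ⟨[(sf1, true)], some (f1, true)⟩,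
   ⟨[(sf2, true)], some (f2, true)⟩]

/-- The external premises. -/
def houseE : List (At × Bool) :=
  [(sf1, true), (sf1, false), (sf2, true), (sf2, false), (f1, false), (f2, false)]

/-- The explanatory closure: the causal rules together with the defaults `l ⇒ l`
for the external premises. -/
def houseClosure : List (LitRule At) :=
  houseRules ++ houseE.map (fun l => ⟨[l], some l⟩)

/-- The causal system `(Δ, E, ∅)` of the two houses. -/
def houseCS : CausalSystem At where
  Δ := theoryPairs houseRules
  E := {l | l ∈ houseE}
  O := ∅

/-- The world `ω₂` in which both houses burn but neither initially caught fire. -/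
def ω₂ : At → Bool := fun a =>
  match a with
  | f1 => true
  | f2 => true
  | _ => false


instance : Fintype At := ⟨{sf1, sf2, f1, f2}, by intro x; cases x <;> simp⟩

lemma derives_sound {α : Type} {Δ : Set (Form α × Form α)} {w : α → Bool}
    (hΔ : ∀ p ∈ Δ, p.1.eval w = true → p.2.eval w = true) :
    ∀ {φ ψ : Form α}, Derives Δ φ ψ → φ.eval w = true → ψ.eval w = true := by
  intro φ ψ h
  induction h with
  | base hp => exact hΔ _ hp
  | strengthening hent _ ih =>
      intro h; exact ih (hent w (by intro χ hχ; cases hχ; exact h))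
  | weakening _ hent ih =>
      intro h; exact hent w (by intro χ hχ; cases hχ; exact ih h)
  | and _ _ ih1 ih2 =>
      intro h; simp [Form.eval, ih1 h, ih2 h]
  | top => intro h; exact h
  | bot => intro h; exact h
  | cut _ _ ih1 ih2 =>
      intro h; exact ih2 (by simp [Form.eval, h, ih1 h])
  | or _ _ ih1 ih2 =>
      intro h
      simp only [Form.eval, Bool.or_eq_true] at h
      cases h with
      | inl h => exact ih1 h
      | inr h => exact ih2 h

def w0 : At → Bool := fun _ => false

lemma closure_sound : ∀ p ∈ houseCS.closure, p.1.eval w0 = true → p.2.eval w0 = true := by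
  rintro p (hp | hp)
  · obtain ⟨r, hr, rfl⟩ := hp
    fin_cases hr <;> decide
  · obtain ⟨l, _, rfl⟩ := hp
    exact id

lemma extTrue_sound : ∀ φ ∈ houseCS.extTrue ω₂, φ.eval w0 = true := by
  rintro φ ⟨l, hl, rfl, hev⟩
  have hl' : l ∈ houseE := hl
  fin_cases hl'  <;> revert hev <;> decide

lemma conjList_sound {α : Type} {w : α → Bool} :
    ∀ L : List (Form α), (∀ φ ∈ L, φ.eval w = true) → (conjList L).eval w = true := by
  intro L hL
  induction L with
  | nil => rfl
  | cons a t ih =>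
      simp only [conjList, List.foldr] at *
      simp [Form.eval, hL a (by simp), ih (fun φ hφ => hL φ (by simp [hφ]))]

/-- `ω₂` models the completion of the explanatory closure of the
two-houses causal theory, but is NOT a causal world of the causal system `(Δ, E, ∅)`:
`C(ω₂ ∩ E) ≠ ω₂`. -/
theorem houses_completion_but_not_causalWorld :
    ModelsCompletion houseClosure ω₂ ∧
      Cons houseCS.closure (houseCS.extTrue ω₂) ≠ worldSet ω₂ := by
  constructor
  · constructor
    · decide
    · decide
  · intro heq
    have hf1 : Form.atom f1 ∈ worldSet ω₂ := by
      simp [worldSet, Form.eval, ω₂]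
    rw [← heq] at hf1
    obtain ⟨L, hL, hD⟩ := hf1
    have : (Form.atom f1).eval w0 = true :=
      derives_sound closure_sound hD
        (conjList_sound L (fun φ hφ => extTrue_sound φ (hL φ hφ)))
    simp [Form.eval, w0] at this
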